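/- For CTL*: a formula φ is satisfiable if and only if its guarded path-relativization φ̂ = Θ ∧ φ' is satisfiable, where ·' replaces each path quantifier ∀α by ∀(□p_{n+1} → α') and Θ = p_{n+1} ∧ AG(EX p_{n+1} ↔ p_{n+1}). -/

import Mathlib

/-- Serial Kripke models. -/
structure Kripke (S : Type) where
  rel : S → S → Prop
  serial : ∀ s, ∃ t, rel s t
  val : ℕ → S → Prop

def isPath {S : Type} (M : Kripke S) (π : ℕ → S) : Prop :=
  ∀ i, M.rel (π i) (π (i + 1))

mutual
/-- CTL* state formulas. -/
inductive SF : Type where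
  | var : ℕ → SF
  | bot : SF
  | imp : SF → SF → SF
  | all : PF → SF
/-- CTL* path formulas. -/
inductive PF : Type where
  | st : SF → PF
  | imp : PF → PF → PF
  | unt : PF → PF → PF
  | next : PF → PF
end

def SF.neg (φ : SF) : SF := .imp φ .bot
def PF.neg (ϑ : PF) : PF := .imp ϑ (.st .bot)
def PF.top : PF := PF.neg (.st .bot)
/-- □ϑ = ¬(⊤ U ¬ϑ). -/
def PF.box (ϑ : PF) : PF := PF.neg (.unt PF.top (PF.neg ϑ))
/-- ∃ϑ = ¬∀¬ϑ. -/
def SF.exa (ϑ : PF) : SF := SF.neg (.all (PF.neg ϑ))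
def SF.conj (φ ψ : SF) : SF := SF.neg (.imp φ (SF.neg ψ))
def SF.iffc (φ ψ : SF) : SF := SF.conj (.imp φ ψ) (.imp ψ φ)
/-- AG φ = ∀□φ. -/
def SF.ag (φ : SF) : SF := .all (PF.box (.st φ))
/-- EX φ = ∃Xφ. -/
def SF.ex (φ : SF) : SF := SF.exa (.next (.st φ))

mutual
/-- Satisfaction of state formulas at states. -/
def ssat {S : Type} (M : Kripke S) : SF → S → Prop
  | .var n, s => M.val n s
  | .bot, _ => False
  | .imp a b, s => ssat M a s → ssat M b s
  | .all ϑ, s => ∀ π : ℕ → S, isPath M π → π 0 = s → psat M ϑ π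
/-- Satisfaction of path formulas on paths. -/
def psat {S : Type} (M : Kripke S) : PF → (ℕ → S) → Prop
  | .st φ, π => ssat M φ (π 0)
  | .imp a b, π => psat M a π → psat M b π
  | .unt a b, π => ∃ i, psat M b (fun j => π (i + j)) ∧
      ∀ j, j < i → psat M a (fun l => π (j + l))
  | .next a, π => psat M a (fun j => π (j + 1))
end

def ssatisfiable (φ : SF) : Prop := ∃ (S : Type) (M : Kripke S) (s : S), ssat M φ s

mutual
def soccurs (q : ℕ) : SF → Prop
  | .var n => n = q
  | .bot => False
  | .imp a b => soccurs q a ∨ soccurs q b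
  | .all ϑ => poccurs q ϑ
def poccurs (q : ℕ) : PF → Prop
  | .st φ => soccurs q φ
  | .imp a b => poccurs q a ∨ poccurs q b
  | .unt a b => poccurs q a ∨ poccurs q b
  | .next a => poccurs q a
end

mutual
/-- The path-relativizing translation ·' with guard variable q:
(∀α)' = ∀(□q → α'), homomorphic elsewhere. -/
def srel (q : ℕ) : SF → SF
  | .var n => .var n
  | .bot => .bot
  | .imp a b => .imp (srel q a) (srel q b)
  | .all ϑ => .all (.imp (PF.box (.st (.var q))) (prel q ϑ))
def prel (q : ℕ) : PF → PF
  | .st φ => .st (srel q φ)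
  | .imp a b => .imp (prel q a) (prel q b)
  | .unt a b => .unt (prel q a) (prel q b)
  | .next a => .next (prel q a)
end

/-- Θ = q ∧ AG(EX q ↔ q). -/
def ThetaS (q : ℕ) : SF :=
  SF.conj (.var q) (SF.ag (SF.iffc (SF.ex (.var q)) (.var q)))

/-- χ₀ = ∀□p, χ_{k+1} = p ∧ EX(¬p ∧ EX χ_k); p is var 0. -/
def chiS : ℕ → SF
  | 0 => SF.ag (.var 0)
  | k + 1 => SF.conj (.var 0) (SF.ex (SF.conj (SF.neg (.var 0)) (SF.ex (chiS k))))

/-- A_m = χ_m ∧ EX AG ¬p. -/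
def AformS (m : ℕ) : SF := SF.conj (chiS m) (SF.ex (SF.ag (SF.neg (.var 0))))

/-- B_m = EX A_m. -/
def BformS (m : ℕ) : SF := SF.ex (AformS m)

mutual
/-- The substitution σ : pᵢ ↦ Bᵢ for 1 ≤ i ≤ n+1. -/
def sigmaS (n : ℕ) : SF → SF
  | .var i => if 1 ≤ i ∧ i ≤ n + 1 then BformS i else .var i
  | .bot => .bot
  | .imp a b => .imp (sigmaS n a) (sigmaS n b)
  | .all ϑ => .all (sigmaP n ϑ)
def sigmaP (n : ℕ) : PF → PF
  | .st φ => .st (sigmaS n φ)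
  | .imp a b => .imp (sigmaP n a) (sigmaP n b)
  | .unt a b => .unt (sigmaP n a) (sigmaP n b)
  | .next a => .next (sigmaP n a)
end

/-! The translation is harmless in a model where the guard holds everywhere, and the guard
variable is fresh for φ, so any model of φ can be made a model of φ̂ by declaring the guard
true everywhere. Conversely, Θ makes the guard states reachable from the root serial,
and on the submodel of those states the guarded quantifier ∀(□q → α') is exactly ∀α. -/

namespace Kripke

variable {S : Type} (M : Kripke S)

noncomputable def next (s : S) : S := (M.serial s).choose

theorem rel_next (s : S) : M.rel s (M.next s) := (M.serial s).choose_spec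

theorem isPath_iterate_next (s : S) : isPath M fun k => M.next^[k] s := fun k => by
  simpa only [Function.iterate_succ_apply'] using M.rel_next _

variable {M}

theorem isPath_cons {t : S} {π : ℕ → S} (ht : M.rel t (π 0)) (hπ : isPath M π) :
    isPath M (Stream'.cons t π)
  | 0 => ht
  | k + 1 => hπ k

def restrict (P : S → Prop) (hP : ∀ t, P t → ∃ u, M.rel t u ∧ P u) : Kripke {x // P x} where
  rel a b := M.rel a b
  serial a := let ⟨u, hr, hu⟩ := hP a a.2; ⟨⟨u, hu⟩, hr⟩
  val m a := M.val m a

end Kripke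

section Semantics

variable {S : Type} {M : Kripke S}

theorem psat_box {ϑ : PF} {π : ℕ → S} :
    psat M (PF.box ϑ) π ↔ ∀ i, psat M ϑ fun j => π (i + j) := by
  simp only [PF.box, PF.neg, PF.top, psat, ssat]
  constructor
  · intro h i
    by_contra hi
    exact h ⟨i, hi, fun _ _ h => h⟩
  · rintro h ⟨i, hi, -⟩
    exact hi (h i)

theorem ssat_conj {a b : SF} {t : S} :
    ssat M (SF.conj a b) t ↔ ssat M a t ∧ ssat M b t := by
  simp only [SF.conj, SF.neg, ssat]
  tauto

theorem ssat_iffc {a b : SF} {t : S} :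
    ssat M (SF.iffc a b) t ↔ (ssat M a t ↔ ssat M b t) := by
  simp only [SF.iffc, ssat_conj, ssat]
  tauto

theorem ssat_ex {a : SF} {t : S} : ssat M (SF.ex a) t ↔ ∃ u, M.rel t u ∧ ssat M a u := by
  simp only [SF.ex, SF.exa, SF.neg, PF.neg, ssat, psat]
  constructor
  · intro h
    by_contra! hne
    exact h fun π hπ h0 ha => hne (π 1) (h0 ▸ hπ 0) ha
  · rintro ⟨u, hr, hu⟩ h
    exact h _ (Kripke.isPath_cons hr (M.isPath_iterate_next u)) rfl hu

theorem ssat_ag {a : SF} {t : S} :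
    ssat M (SF.ag a) t ↔ ∀ π, isPath M π → π 0 = t → ∀ i, ssat M a (π i) := by
  simp only [SF.ag, ssat, psat_box, psat]
  rfl

theorem ssat_ag_of_rel {a : SF} {t u : S} (h : ssat M (SF.ag a) t) (hr : M.rel t u) :
    ssat M (SF.ag a) u := by
  rw [ssat_ag] at h ⊢
  intro π hπ h0 i
  exact h _ (Kripke.isPath_cons (h0 ▸ hr) hπ) rfl (i + 1)

theorem ssat_of_ag_of_reflTransGen {a : SF} {s t : S} (h : ssat M (SF.ag a) s)
    (hr : Relation.ReflTransGen M.rel s t) : ssat M a t := by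
  have hag : ssat M (SF.ag a) t := by
    induction hr with
    | refl => exact h
    | tail _ hstep ih => exact ssat_ag_of_rel ih hstep
  exact ssat_ag.mp hag _ (M.isPath_iterate_next t) rfl 0

theorem ssat_thetaS_of_forall_val {q : ℕ} (hq : ∀ t, M.val q t) (s : S) :
    ssat M (ThetaS q) s := by
  refine ssat_conj.mpr ⟨hq s, ssat_ag.mpr fun π _ _ i => ssat_iffc.mpr ?_⟩
  exact ⟨fun _ => hq _, fun _ => let ⟨u, hu⟩ := M.serial (π i); ssat_ex.mpr ⟨u, hu, hq u⟩⟩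

end Semantics

section Coincidence

variable {S : Type} (M : Kripke S) (v : ℕ → S → Prop)

mutual
theorem ssat_congr_val :
    ∀ α : SF, (∀ m, soccurs m α → v m = M.val m) →
      ∀ t, (ssat {M with val := v} α t ↔ ssat M α t)
  | .var m, h, t => by simp only [ssat, h m rfl]
  | .bot, _, _ => Iff.rfl
  | .imp a b, h, t =>
      imp_congr (ssat_congr_val a (fun m hm => h m (.inl hm)) t)
        (ssat_congr_val b (fun m hm => h m (.inr hm)) t)
  | .all ϑ, h, _ =>
      forall_congr' fun π => forall_congr' fun _ => forall_congr' fun _ => psat_congr_val ϑ h π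
theorem psat_congr_val :
    ∀ ϑ : PF, (∀ m, poccurs m ϑ → v m = M.val m) →
      ∀ π, (psat {M with val := v} ϑ π ↔ psat M ϑ π)
  | .st a, h, π => ssat_congr_val a h (π 0)
  | .imp a b, h, π =>
      imp_congr (psat_congr_val a (fun m hm => h m (.inl hm)) π)
        (psat_congr_val b (fun m hm => h m (.inr hm)) π)
  | .unt a b, h, _ =>
      exists_congr fun _ => and_congr (psat_congr_val b (fun m hm => h m (.inr hm)) _)
        (forall_congr' fun _ => forall_congr' fun _ =>
          psat_congr_val a (fun m hm => h m (.inl hm)) _)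
  | .next a, h, _ => psat_congr_val a h _
end

end Coincidence

section Relativization

variable {S : Type} {M : Kripke S} {q : ℕ}

mutual
theorem ssat_srel_of_forall_val (hq : ∀ t, M.val q t) :
    ∀ (α : SF) t, ssat M (srel q α) t ↔ ssat M α t
  | .var _, _ => Iff.rfl
  | .bot, _ => Iff.rfl
  | .imp a b, t => imp_congr (ssat_srel_of_forall_val hq a t) (ssat_srel_of_forall_val hq b t)
  | .all ϑ, _ => by
      simp only [srel, ssat, psat, psat_box, hq, implies_true, true_implies]
      exact forall_congr' fun π => forall_congr' fun _ => forall_congr' fun _ =>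
        psat_prel_of_forall_val hq ϑ π
theorem psat_prel_of_forall_val (hq : ∀ t, M.val q t) :
    ∀ (ϑ : PF) π, psat M (prel q ϑ) π ↔ psat M ϑ π
  | .st a, π => ssat_srel_of_forall_val hq a (π 0)
  | .imp a b, π => imp_congr (psat_prel_of_forall_val hq a π) (psat_prel_of_forall_val hq b π)
  | .unt a b, _ =>
      exists_congr fun _ => and_congr (psat_prel_of_forall_val hq b _)
        (forall_congr' fun _ => forall_congr' fun _ => psat_prel_of_forall_val hq a _)
  | .next a, _ => psat_prel_of_forall_val hq a _
end

variable {P : S → Prop} {hP : ∀ t, P t → ∃ u, M.rel t u ∧ P u}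

theorem forall_mem_of_guarded_path (hclosed : ∀ t u, P t → M.rel t u → M.val q u → P u)
    {π : ℕ → S} (hπ : isPath M π) (h0 : P (π 0)) (hguard : ∀ i, M.val q (π i)) :
    ∀ i, P (π i)
  | 0 => h0
  | i + 1 => hclosed _ _ (forall_mem_of_guarded_path hclosed hπ h0 hguard i) (hπ i) (hguard _)

mutual
theorem ssat_restrict_iff (hguard : ∀ t, P t → M.val q t)
    (hclosed : ∀ t u, P t → M.rel t u → M.val q u → P u) :
    ∀ (α : SF) (t : {x // P x}), ssat (M.restrict P hP) α t ↔ ssat M (srel q α) t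
  | .var _, _ => Iff.rfl
  | .bot, _ => Iff.rfl
  | .imp a b, t =>
      imp_congr (ssat_restrict_iff hguard hclosed a t) (ssat_restrict_iff hguard hclosed b t)
  | .all ϑ, t => by
      simp only [srel, ssat, psat, psat_box]
      constructor
      · intro H π hπ h0 hbox
        have hπP := forall_mem_of_guarded_path hclosed hπ (h0 ▸ t.2) hbox
        exact (psat_restrict_iff hguard hclosed ϑ fun i => ⟨π i, hπP i⟩).mp
          (H _ hπ (Subtype.ext h0))
      · intro H π hπ h0
        exact (psat_restrict_iff hguard hclosed ϑ π).mpr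
          (H _ hπ (congrArg Subtype.val h0) fun i => hguard _ (π i).2)
theorem psat_restrict_iff (hguard : ∀ t, P t → M.val q t)
    (hclosed : ∀ t u, P t → M.rel t u → M.val q u → P u) :
    ∀ (ϑ : PF) (π : ℕ → {x // P x}),
      psat (M.restrict P hP) ϑ π ↔ psat M (prel q ϑ) fun i => π i
  | .st a, π => ssat_restrict_iff hguard hclosed a (π 0)
  | .imp a b, π =>
      imp_congr (psat_restrict_iff hguard hclosed a π) (psat_restrict_iff hguard hclosed b π)
  | .unt a b, _ =>
      exists_congr fun _ => and_congr (psat_restrict_iff hguard hclosed b _)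
        (forall_congr' fun _ => forall_congr' fun _ => psat_restrict_iff hguard hclosed a _)
  | .next a, _ => psat_restrict_iff hguard hclosed a _
end

end Relativization

theorem ssatisfiable_of_ssat_thetaS_srel {S : Type} {M : Kripke S} {q : ℕ} {φ : SF} {s : S}
    (hθ : ssat M (ThetaS q) s) (hφ : ssat M (srel q φ) s) : ssatisfiable φ := by
  obtain ⟨hqs, hag⟩ := ssat_conj.mp hθ
  let P t := Relation.ReflTransGen M.rel s t ∧ M.val q t
  have hP : ∀ t, P t → ∃ u, M.rel t u ∧ P u := fun t ⟨hr, hqt⟩ =>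
    let ⟨u, hru, hqu⟩ := ssat_ex.mp ((ssat_iffc.mp (ssat_of_ag_of_reflTransGen hag hr)).mpr hqt)
    ⟨u, hru, hr.tail hru, hqu⟩
  refine ⟨_, M.restrict P hP, ⟨s, .refl, hqs⟩, ?_⟩
  exact (ssat_restrict_iff (fun _ h => h.2) (fun _ _ ht hr hq => ⟨ht.1.tail hr, hq⟩) φ _).mpr hφ

/-- A CTL* formula φ with variables among p₁,…,pₙ is satisfiable iff its guarded
path-relativization φ̂ = Θ ∧ φ' (guard p_{n+1}) is satisfiable. -/
theorem ctlstar_guarded_relativization_sat (n : ℕ) (φ : SF)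
    (hvars : ∀ q, soccurs q φ → 1 ≤ q ∧ q ≤ n) :
    ssatisfiable φ ↔ ssatisfiable (SF.conj (ThetaS (n + 1)) (srel (n + 1) φ)) := by
  constructor
  · rintro ⟨S, M, s, hs⟩
    let M' : Kripke S := {M with val := Function.update M.val (n + 1) fun _ => True}
    have hguard : ∀ t, M'.val (n + 1) t := by simp [M']
    have hφ : ssat M' φ s := (ssat_congr_val M _ φ (fun m hm =>
      Function.update_of_ne (by have := hvars m hm; omega) _ _) s).mpr hs
    exact ⟨S, M', s, ssat_conj.mpr
      ⟨ssat_thetaS_of_forall_val hguard s, (ssat_srel_of_forall_val hguard φ s).mpr hφ⟩⟩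
  · rintro ⟨S, M, s, hs⟩
    exact ssatisfiable_of_ssat_thetaS_srel (ssat_conj.mp hs).1 (ssat_conj.mp hs).2
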